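/- For every finite set P of n points in the plane with pairwise distances at most 1 and every r ≥ √3/4, there exists a closed disc of radius r containing at least ⌈n/3⌉ points of P. Combined with the equilateral-triangle example, N_n(r) = ⌈n/3⌉ for all r ∈ [√3/4, 1/2). -/
import Mathlib

open Metric Real
open scoped Classical

section helpers

private lemma contInf' {ι : Type*} (s : Finset ι) (hs : s.Nonempty) (g : ι → ℝ → ℝ)
    (hg : ∀ i, Continuous (g i)) : Continuous fun θ => s.inf' hs fun i => g i θ :=
  Continuous.finset_inf'_apply hs fun i _ => hg i

private lemma contSup' {ι : Type*} (s : Finset ι) (hs : s.Nonempty) (g : ι → ℝ → ℝ)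
    (hg : ∀ i, Continuous (g i)) : Continuous fun θ => s.sup' hs fun i => g i θ :=
  Continuous.finset_sup'_apply hs fun i _ => hg i

private lemma neg_sup' {ι : Type*} (s : Finset ι) (hs : s.Nonempty) (f : ι → ℝ) :
    (s.inf' hs fun i => -(f i)) = -(s.sup' hs f) := by
  apply le_antisymm
  · obtain ⟨j, hj, hje⟩ := Finset.exists_mem_eq_sup' hs f
    calc (s.inf' hs fun i => -(f i)) ≤ -(f j) := Finset.inf'_le _ hj
    _ = -(s.sup' hs f) := by rw [hje]
  · exact Finset.le_inf' _ _ fun i hi => neg_le_neg (Finset.le_sup' f hi)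

private lemma ceil_up (n : ℕ) : 3 * ⌈(n:ℝ)/3⌉₊ ≤ n + 2 := by
  have h := Nat.ceil_lt_add_one (show (0:ℝ) ≤ (n:ℝ)/3 by positivity)
  have h2 : (3:ℝ) * (⌈(n:ℝ)/3⌉₊ : ℝ) < (n:ℝ) + 3 := by linarith
  have h3 : 3 * ⌈(n:ℝ)/3⌉₊ < n + 3 := by exact_mod_cast h2
  omega

private lemma ceil_dn (n : ℕ) : n ≤ 3 * ⌈(n:ℝ)/3⌉₊ := by
  have hceil : (n : ℝ) / 3 ≤ (⌈(n:ℝ)/3⌉₊ : ℝ) := Nat.le_ceil _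
  have h3 : (n : ℝ) ≤ 3 * (⌈(n:ℝ)/3⌉₊ : ℝ) := by linarith
  exact_mod_cast h3

private lemma pigeon3 (n : ℕ) (σ : Fin n → Fin 3) :
    ∃ j : Fin 3, ⌈(n:ℝ)/3⌉₊ ≤ (Finset.univ.filter fun i => σ i = j).card := by
  by_contra hcon
  push_neg at hcon
  have hsum : ∑ j : Fin 3, (Finset.univ.filter fun i => σ i = j).card = n := by
    rw [← Finset.card_eq_sum_card_fiberwise (fun x _ => Finset.mem_univ (σ x))]
    simp
  have hup := ceil_up n
  have h0 := hcon 0; have h1 := hcon 1; have h2 := hcon 2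
  rw [Fin.sum_univ_three] at hsum
  omega

private lemma countRes (n j : ℕ) (hj : j < 3) :
    (Finset.univ.filter fun i : Fin n => (i : ℕ) % 3 = j).card ≤ ⌈(n:ℝ)/3⌉₊ := by
  have hcard : (Finset.univ.filter fun i : Fin n => (i : ℕ) % 3 = j).card
      = ∑ i ∈ Finset.range n, if i % 3 = j then 1 else 0 := by
    rw [Finset.card_filter]
    exact Fin.sum_univ_eq_sum_range (fun i => if i % 3 = j then 1 else 0) n
  have key : ∀ N : ℕ, (∑ i ∈ Finset.range N, if i % 3 = j then 1 else 0)
      = N / 3 + (if j < N % 3 then 1 else 0) := by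
    intro N
    induction N with
    | zero => simp
    | succ m ih =>
      rw [Finset.sum_range_succ, ih]
      split_ifs <;> omega
  have h3' := ceil_dn n
  rw [hcard, key]
  have := Nat.mod_lt n (show 0 < 3 by norm_num)
  split_ifs <;> omega

private lemma keyA (s a b : ℝ) (hs : s^2 = 3) (hs0 : 0 ≤ s)
    (h60 : a + s*b ≤ 1) (h7 : 0 ≤ b) (h9 : b ≤ s*a) (h1 : a ≤ 1/2) :
    (a - 1/8)^2 + (b - s/8)^2 ≤ 3/16 := by
  have hspos : 0 < s := by nlinarith
  have ha0 : 0 ≤ a := by nlinarith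
  have hsb : s*b ≤ 3/4 := by nlinarith
  have hb : b ≤ s/4 := by nlinarith
  nlinarith [mul_nonneg ha0 (by linarith : (0:ℝ) ≤ 1/2 - a),
    mul_nonneg h7 (by linarith : (0:ℝ) ≤ s/4 - b)]

private lemma keyB (s a b : ℝ) (hs : s^2 = 3) (hs0 : 0 ≤ s)
    (h3 : -a + s*b ≤ 1) (h60 : a + s*b ≤ 1) (h8 : 0 ≤ s*a + b) (h9 : s*a ≤ b) :
    (a - 1/8)^2 + (b - s/8)^2 ≤ 3/16 := by
  have e1 : (-a/2 + s*b/2) + s*(s*a/2 + b/2) = a + s*b := by linear_combination (a/2)*hs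
  have e2 : (-a/2 + s*b/2) - 1/2 = (-a + s*b - 1)/2 := by ring
  have e3 : s*(-a/2 + s*b/2) - (s*a/2 + b/2) = -(s*a) + b := by linear_combination (b/2)*hs
  have key := keyA s (-a/2 + s*b/2) (s*a/2 + b/2) hs hs0
    (by linarith [e1]) (by linarith) (by linarith [e3]) (by linarith)
  have e : ((-a/2 + s*b/2) - 1/8)^2 + ((s*a/2 + b/2) - s/8)^2
      = (a - 1/8)^2 + (b - s/8)^2 := by linear_combination ((a^2+b^2)/4 - a/8)*hs
  linarith [key, e.ge, e.le]

private lemma keyS1 (s a b : ℝ) (hs : s^2 = 3) (hs0 : 0 ≤ s)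
    (h1 : |a| ≤ 1/2) (h2 : |a + s*b| ≤ 1) (h3 : |-a + s*b| ≤ 1)
    (h7 : 0 ≤ b) (h8 : 0 ≤ s*a + b) :
    (a - 1/8)^2 + (b - s/8)^2 ≤ 3/16 := by
  rw [abs_le] at h1 h2 h3
  rcases le_total b (s*a) with h9 | h9
  · exact keyA s a b hs hs0 h2.2 h7 h9 h1.2
  · exact keyB s a b hs hs0 h3.2 h2.2 h8 h9

private lemma keyS2 (s a b : ℝ) (hs : s^2 = 3) (hs0 : 0 ≤ s)
    (h1 : |a| ≤ 1/2) (h2 : |a + s*b| ≤ 1) (h3 : |-a + s*b| ≤ 1)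
    (hc1 : s*a + b ≤ 0) (hc2 : s*a ≤ b) :
    (a + 1/4)^2 + b^2 ≤ 3/16 := by
  have e2 : (-a/2 + s*b/2) + s*(-(s*a)/2 - b/2) = -(2*a) := by linear_combination (-a/2)*hs
  have e3 : -(-a/2 + s*b/2) + s*(-(s*a)/2 - b/2) = -(a + s*b) := by linear_combination (-a/2)*hs
  have e4 : s*(-a/2 + s*b/2) + (-(s*a)/2 - b/2) = -(s*a) + b := by linear_combination (b/2)*hs
  have key := keyS1 s (-a/2 + s*b/2) (-(s*a)/2 - b/2) hs hs0
    (by rw [abs_le] at h3 ⊢; constructor <;> linarith)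
    (by rw [e2]; rw [abs_le] at h1 ⊢; constructor <;> linarith)
    (by rw [e3, abs_neg]; exact h2)
    (by linarith) (by rw [e4]; linarith)
  have e : ((-a/2 + s*b/2) - 1/8)^2 + ((-(s*a)/2 - b/2) - s/8)^2
      = (a + 1/4)^2 + b^2 := by linear_combination ((a^2+b^2)/4 + a/8 + 1/64)*hs
  linarith [key, e.ge, e.le]

private lemma keyS3 (s a b : ℝ) (hs : s^2 = 3) (hs0 : 0 ≤ s)
    (h1 : |a| ≤ 1/2) (h2 : |a + s*b| ≤ 1) (h3 : |-a + s*b| ≤ 1)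
    (hc1 : b ≤ 0) (hc2 : 0 ≤ s*a - b) :
    (a - 1/8)^2 + (b + s/8)^2 ≤ 3/16 := by
  have e2 : (-a/2 - s*b/2) + s*(s*a/2 - b/2) = -(-a + s*b) := by linear_combination (a/2)*hs
  have e3 : -(-a/2 - s*b/2) + s*(s*a/2 - b/2) = 2*a := by linear_combination (a/2)*hs
  have e4 : s*(-a/2 - s*b/2) + (s*a/2 - b/2) = -(2*b) := by linear_combination (-b/2)*hs
  have key := keyS1 s (-a/2 - s*b/2) (s*a/2 - b/2) hs hs0
    (by rw [abs_le] at h2 ⊢; constructor <;> linarith)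
    (by rw [e2, abs_neg]; exact h3)
    (by rw [e3]; rw [abs_le] at h1 ⊢; constructor <;> linarith)
    (by linarith) (by rw [e4]; linarith)
  have e : ((-a/2 - s*b/2) - 1/8)^2 + ((s*a/2 - b/2) - s/8)^2
      = (a - 1/8)^2 + (b + s/8)^2 := by linear_combination ((a^2+b^2)/4 - a/8)*hs
  linarith [key, e.ge, e.le]

private lemma hexCover (s a b : ℝ) (hs : s^2 = 3) (hs0 : 0 ≤ s)
    (h1 : |a| ≤ 1/2) (h2 : |a + s*b| ≤ 1) (h3 : |-a + s*b| ≤ 1) :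
    ∃ j : Fin 3, (a - ![(1:ℝ)/8, -(1/4), 1/8] j)^2 + (b - ![s/8, 0, -(s/8)] j)^2 ≤ 3/16 := by
  by_cases hb : 0 ≤ b
  · by_cases h8 : 0 ≤ s*a + b
    · exact ⟨0, by simpa using keyS1 s a b hs hs0 h1 h2 h3 hb h8⟩
    · refine ⟨1, ?_⟩
      have := keyS2 s a b hs hs0 h1 h2 h3 (by linarith) (by linarith)
      simpa using this
  · by_cases h9 : 0 ≤ s*a - b
    · refine ⟨2, ?_⟩
      have := keyS3 s a b hs hs0 h1 h2 h3 (by linarith) h9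
      simpa [sub_neg_eq_add] using this
    · refine ⟨1, ?_⟩
      have := keyS2 s a b hs hs0 h1 h2 h3 (by linarith) (by linarith)
      simpa using this

private lemma dist_coords (p q : EuclideanSpace ℝ (Fin 2)) :
    dist p q = Real.sqrt ((p 0 - q 0)^2 + (p 1 - q 1)^2) := by
  rw [EuclideanSpace.dist_eq, Fin.sum_univ_two, Real.dist_eq, Real.dist_eq, sq_abs, sq_abs]

end helpers

/-- `N_n(r) = ⌈n/3⌉` for all `r ∈ [√3/4, 1/2)`: every configuration of `n` points of
diameter at most 1 admits a closed disc of radius `r` covering at least `⌈n/3⌉` points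
(lower bound, via Borsuk's partition), and some configuration of `n` points of diameter at
most 1 admits no closed disc of radius `r` covering more than `⌈n/3⌉` points (upper bound,
via the equilateral triangle example). -/
theorem N_eq_ceil_third (r : ℝ) (hr0 : Real.sqrt 3 / 4 ≤ r) (hr1 : r < 1 / 2) (n : ℕ) :
    (∀ P : Fin n → EuclideanSpace ℝ (Fin 2), (∀ i j, dist (P i) (P j) ≤ 1) →
      ∃ c : EuclideanSpace ℝ (Fin 2),
        ⌈(n : ℝ) / 3⌉₊ ≤ (Finset.univ.filter (fun i => P i ∈ closedBall c r)).card) ∧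
    (∃ P : Fin n → EuclideanSpace ℝ (Fin 2), (∀ i j, dist (P i) (P j) ≤ 1) ∧
      ∀ c : EuclideanSpace ℝ (Fin 2),
        (Finset.univ.filter (fun i => P i ∈ closedBall c r)).card ≤ ⌈(n : ℝ) / 3⌉₊) := by
  have hs : (Real.sqrt 3)^2 = 3 := Real.sq_sqrt (by norm_num)
  have hs0 : (0:ℝ) ≤ Real.sqrt 3 := Real.sqrt_nonneg 3
  have hspos : (0:ℝ) < Real.sqrt 3 := by nlinarith
  set s : ℝ := Real.sqrt 3 with hsdef
  constructor
  · -- lower bound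
    intro P hP
    rcases Nat.eq_zero_or_pos n with hn | hn
    · subst hn
      exact ⟨0, by simp⟩
    have hne : (Finset.univ : Finset (Fin n)).Nonempty := ⟨⟨0, hn⟩, Finset.mem_univ _⟩
    set x : Fin n → ℝ := fun i => P i 0 with hxdef
    set y : Fin n → ℝ := fun i => P i 1 with hydef
    set f : ℝ → Fin n → ℝ := fun φ i => Real.cos φ * x i + Real.sin φ * y i with hfdef
    have hproj : ∀ φ i j, f φ i - f φ j ≤ 1 := by
      intro φ i j
      have hd : dist (P i) (P j) = Real.sqrt ((x i - x j)^2 + (y i - y j)^2) := dist_coords _ _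
      have h1 : f φ i - f φ j = Real.cos φ * (x i - x j) + Real.sin φ * (y i - y j) := by
        simp only [hfdef]; ring
      have h2 : |Real.cos φ * (x i - x j) + Real.sin φ * (y i - y j)|
          ≤ Real.sqrt ((x i - x j)^2 + (y i - y j)^2) := by
        rw [← Real.sqrt_sq_eq_abs]
        apply Real.sqrt_le_sqrt
        nlinarith [sq_nonneg (Real.sin φ * (x i - x j) - Real.cos φ * (y i - y j)),
          Real.sin_sq_add_cos_sq φ]
      calc f φ i - f φ j ≤ |Real.cos φ * (x i - x j) + Real.sin φ * (y i - y j)| := by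
            rw [h1]; exact le_abs_self _
        _ ≤ Real.sqrt ((x i - x j)^2 + (y i - y j)^2) := h2
        _ = dist (P i) (P j) := hd.symm
        _ ≤ 1 := hP i j
    set m : ℕ → ℝ → ℝ := fun k θ => Finset.univ.inf' hne (f (θ + k * (π/3))) with hmdef
    set M : ℕ → ℝ → ℝ := fun k θ => Finset.univ.sup' hne (f (θ + k * (π/3))) with hMdef
    have hmM : ∀ k θ, M k θ - m k θ ≤ 1 := by
      intro k θ
      obtain ⟨i, _, hi⟩ := Finset.exists_mem_eq_sup' hne (f (θ + k*(π/3)))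
      obtain ⟨j, _, hj⟩ := Finset.exists_mem_eq_inf' hne (f (θ + k*(π/3)))
      simp only [hmdef, hMdef]
      rw [hi, hj]
      exact hproj _ i j
    have hmem : ∀ (k : ℕ) (θ : ℝ) (i : Fin n),
        m k θ ≤ f (θ + k*(π/3)) i ∧ f (θ + k*(π/3)) i ≤ M k θ := by
      intro k θ i
      exact ⟨Finset.inf'_le _ (Finset.mem_univ i), Finset.le_sup' _ (Finset.mem_univ i)⟩
    set F : ℝ → ℝ := fun θ => (m 0 θ + M 0 θ) - (m 1 θ + M 1 θ) + (m 2 θ + M 2 θ) with hFdef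
    have hfc : ∀ (k : ℕ) (i : Fin n), Continuous fun θ => f (θ + k*(π/3)) i := by
      intro k i
      simp only [hfdef]
      fun_prop
    have hFcont : Continuous F := by
      have hm : ∀ k : ℕ, Continuous (m k) := fun k => contInf' _ hne _ (hfc k)
      have hM : ∀ k : ℕ, Continuous (M k) := fun k => contSup' _ hne _ (hfc k)
      exact ((((hm 0).add (hM 0)).sub ((hm 1).add (hM 1))).add ((hm 2).add (hM 2)))
    -- symmetry : F (π/3) = - F 0
    have em0 : m 0 (π/3) = m 1 0 := by simp only [hmdef]; norm_num
    have eM0 : M 0 (π/3) = M 1 0 := by simp only [hMdef]; norm_num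
    have em1 : m 1 (π/3) = m 2 0 := by
      simp only [hmdef]
      rw [show (π/3 : ℝ) + (1:ℕ)*(π/3) = 0 + (2:ℕ)*(π/3) by push_cast; ring]
    have eM1 : M 1 (π/3) = M 2 0 := by
      simp only [hMdef]
      rw [show (π/3 : ℝ) + (1:ℕ)*(π/3) = 0 + (2:ℕ)*(π/3) by push_cast; ring]
    have efpi : ∀ i, f (π/3 + (2:ℕ)*(π/3)) i = -(f (0 + (0:ℕ)*(π/3)) i) := by
      intro i
      simp only [hfdef]
      rw [show (π/3 : ℝ) + (2:ℕ)*(π/3) = π by push_cast; ring]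
      rw [show (0:ℝ) + (0:ℕ)*(π/3) = 0 by push_cast; ring]
      rw [Real.cos_pi, Real.sin_pi, Real.cos_zero, Real.sin_zero]
      ring
    have em2 : m 2 (π/3) = -(M 0 0) := by
      simp only [hmdef, hMdef]
      rw [← neg_sup' _ hne]
      exact Finset.inf'_congr hne rfl fun i _ => efpi i
    have eM2 : M 2 (π/3) = -(m 0 0) := by
      simp only [hmdef, hMdef]
      have h := neg_sup' Finset.univ hne (fun i => -(f (0 + (0:ℕ)*(π/3)) i))
      have h2 : Finset.univ.sup' hne (f (π/3 + (2:ℕ)*(π/3)))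
          = Finset.univ.sup' hne (fun i => -(f (0 + (0:ℕ)*(π/3)) i)) :=
        Finset.sup'_congr hne rfl fun i _ => efpi i
      rw [h2]
      have h3 : Finset.univ.inf' hne (fun i => -(fun i => -(f (0 + (0:ℕ)*(π/3)) i)) i)
          = Finset.univ.inf' hne (f (0 + (0:ℕ)*(π/3))) :=
        Finset.inf'_congr hne rfl fun i _ => by simp
      have := neg_sup' Finset.univ hne (fun i => -(f (0 + (0:ℕ)*(π/3)) i))
      rw [h3] at this
      linarith [this]
    have hFsym : F (π/3) = -(F 0) := by
      simp only [hFdef]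
      rw [em0, eM0, em1, eM1, em2, eM2]
      ring
    -- IVT
    have hle : (0:ℝ) ≤ π/3 := by positivity
    have hcont : ContinuousOn F (Set.Icc 0 (π/3)) := hFcont.continuousOn
    obtain ⟨θ, hθmem, hθ⟩ : ∃ θ, θ ∈ Set.Icc 0 (π/3) ∧ F θ = 0 := by
      rcases le_total (F 0) 0 with h | h
      · have h0 : (0:ℝ) ∈ Set.Icc (F 0) (F (π/3)) := by
          rw [hFsym]; constructor <;> linarith
        obtain ⟨θ, hm1, hm2⟩ := intermediate_value_Icc hle hcont h0
        exact ⟨θ, hm1, hm2⟩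
      · have h0 : (0:ℝ) ∈ Set.Icc (F (π/3)) (F 0) := by
          rw [hFsym]; constructor <;> linarith
        obtain ⟨θ, hm1, hm2⟩ := intermediate_value_Icc' hle hcont h0
        exact ⟨θ, hm1, hm2⟩
    -- the three mid values
    set c0 : ℝ := (m 0 θ + M 0 θ)/2 with hc0def
    set c1 : ℝ := (m 1 θ + M 1 θ)/2 with hc1def
    set c2 : ℝ := (m 2 θ + M 2 θ)/2 with hc2def
    have hc : c0 - c1 + c2 = 0 := by
      simp only [hc0def, hc1def, hc2def]
      simp only [hFdef] at hθ
      linarith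
    set Y : ℝ := (2*c1 - c0)/s with hYdef
    set g : Fin n → ℝ := fun i => -Real.sin θ * x i + Real.cos θ * y i with hgdef
    set A : Fin n → ℝ := fun i => f θ i - c0 with hAdef
    set B : Fin n → ℝ := fun i => g i - Y with hBdef
    have hsY : s * Y = 2*c1 - c0 := by
      rw [hYdef]; field_simp
    clear_value x y f m M F c0 c1 c2 Y g A B
    -- the three constraints
    have hang0 : θ + ((0:ℕ):ℝ)*(π/3) = θ := by push_cast; ring
    have hC0 : ∀ i, |A i| ≤ 1/2 := by
      intro i
      have h1 := (hmem 0 θ i).1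
      have h2 := (hmem 0 θ i).2
      have h3 := hmM 0 θ
      rw [hang0] at h1 h2
      rw [abs_le]
      simp only [hAdef]
      constructor <;> (rw [hc0def]; linarith)
    have hadd1 : f (θ + ((1:ℕ):ℝ)*(π/3)) = fun i => (1/2) * f θ i + (s/2) * g i := by
      funext i
      simp only [hfdef, hgdef]
      push_cast
      rw [show θ + 1*(π/3) = θ + π/3 by ring]
      rw [Real.cos_add, Real.sin_add, Real.cos_pi_div_three, Real.sin_pi_div_three]
      rw [← hsdef]
      ring
    have hadd2 : f (θ + ((2:ℕ):ℝ)*(π/3)) = fun i => -(1/2) * f θ i + (s/2) * g i := by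
      funext i
      simp only [hfdef, hgdef]
      push_cast
      rw [show θ + 2*(π/3) = θ + 2*π/3 by ring]
      have hcos23 : Real.cos (2*π/3) = -(1/2) := by
        rw [show (2*π/3 : ℝ) = π - π/3 by ring, Real.cos_pi_sub, Real.cos_pi_div_three]
      have hsin23 : Real.sin (2*π/3) = s/2 := by
        rw [show (2*π/3 : ℝ) = π - π/3 by ring, Real.sin_pi_sub, Real.sin_pi_div_three, ← hsdef]
      rw [Real.cos_add, Real.sin_add, hcos23, hsin23]
      ring
    have hC1 : ∀ i, |A i + s * B i| ≤ 1 := by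
      intro i
      have h1 := (hmem 1 θ i).1
      have h2 := (hmem 1 θ i).2
      have h3 := hmM 1 θ
      rw [hadd1] at h1 h2
      have e : A i + s * B i = 2*((1/2) * f θ i + (s/2) * g i - c1) := by
        rw [hAdef, hBdef]
        linear_combination (-1 : ℝ) * hsY
      rw [abs_le, e]
      constructor <;> (rw [hc1def]; linarith)
    have hC2 : ∀ i, |-(A i) + s * B i| ≤ 1 := by
      intro i
      have h1 := (hmem 2 θ i).1
      have h2 := (hmem 2 θ i).2
      have h3 := hmM 2 θ
      rw [hadd2] at h1 h2
      have e : -(A i) + s * B i = 2*(-(1/2) * f θ i + (s/2) * g i - c2) := by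
        rw [hAdef, hBdef]
        linear_combination (-1 : ℝ) * hsY + 2 * hc
      rw [abs_le, e]
      constructor <;> (rw [hc2def]; linarith)
    have hcover : ∀ i, ∃ j : Fin 3,
        (A i - ![(1:ℝ)/8, -(1/4), 1/8] j)^2 + (B i - ![s/8, 0, -(s/8)] j)^2 ≤ 3/16 :=
      fun i => hexCover s (A i) (B i) hs hs0 (hC0 i) (hC1 i) (hC2 i)
    choose σ hσ using hcover
    obtain ⟨j, hj⟩ := pigeon3 n σ
    set CX : ℝ := c0 + ![(1:ℝ)/8, -(1/4), 1/8] j with hCXdef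
    set CY : ℝ := Y + ![s/8, 0, -(s/8)] j with hCYdef
    set c : EuclideanSpace ℝ (Fin 2) := (WithLp.equiv 2 (Fin 2 → ℝ)).symm
      ![Real.cos θ * CX - Real.sin θ * CY, Real.sin θ * CX + Real.cos θ * CY] with hcdef
    have hc0 : c 0 = Real.cos θ * CX - Real.sin θ * CY := rfl
    have hc1' : c 1 = Real.sin θ * CX + Real.cos θ * CY := rfl
    refine ⟨c, le_trans hj (Finset.card_le_card ?_)⟩
    intro i hi
    simp only [Finset.mem_filter, Finset.mem_univ, true_and] at hi ⊢
    rw [mem_closedBall]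
    have hby := hσ i
    rw [hi] at hby
    have hdist : dist (P i) c = Real.sqrt ((x i - c 0)^2 + (y i - c 1)^2) := by
      simp only [hxdef, hydef]; exact dist_coords _ _
    have hpc : (x i - c 0)^2 + (y i - c 1)^2
        = (A i - ![(1:ℝ)/8, -(1/4), 1/8] j)^2 + (B i - ![s/8, 0, -(s/8)] j)^2 := by
      rw [hc0, hc1']
      simp only [hAdef, hBdef, hfdef, hgdef, hCXdef, hCYdef]
      have ht := Real.sin_sq_add_cos_sq θ
      linear_combination ((c0 + ![(1:ℝ)/8, -(1/4), 1/8] j)^2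
        + (Y + ![s/8, 0, -(s/8)] j)^2 - (x i)^2 - (y i)^2) * ht
    have : dist (P i) c ≤ s/4 := by
      rw [hdist, hpc]
      calc Real.sqrt _ ≤ Real.sqrt (3/16) := Real.sqrt_le_sqrt hby
        _ = s/4 := by
          rw [show (3:ℝ)/16 = (s/4)^2 by rw [div_pow, hs]; norm_num]
          exact Real.sqrt_sq (by linarith)
    linarith
  · -- upper bound : equilateral triangle
    set vx : ℕ → ℝ := fun k => if k = 0 then 0 else if k = 1 then 1 else 1/2 with hvx
    set vy : ℕ → ℝ := fun k => if k = 2 then s/2 else 0 with hvy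
    set V : ℕ → EuclideanSpace ℝ (Fin 2) := fun k =>
      (WithLp.equiv 2 (Fin 2 → ℝ)).symm ![vx k, vy k] with hV
    have hVc : ∀ k, (V k) 0 = vx k ∧ (V k) 1 = vy k := fun k => ⟨rfl, rfl⟩
    have hVdist : ∀ a b : ℕ, a < 3 → b < 3 → a ≠ b → dist (V a) (V b) = 1 := by
      intro a b ha hb hab
      have hd : dist (V a) (V b) = Real.sqrt ((vx a - vx b)^2 + (vy a - vy b)^2) := by
        rw [dist_coords, (hVc a).1, (hVc a).2, (hVc b).1, (hVc b).2]
      rw [hd]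
      have hin : (vx a - vx b)^2 + (vy a - vy b)^2 = 1 := by
        interval_cases a <;> interval_cases b <;>
          first
          | omega
          | (simp only [hvx, hvy]; norm_num; try linarith [hs])
      rw [hin, Real.sqrt_one]
    set P : Fin n → EuclideanSpace ℝ (Fin 2) := fun i => V ((i : ℕ) % 3) with hPdef
    have hmod : ∀ i : Fin n, (i : ℕ) % 3 < 3 := fun i => Nat.mod_lt _ (by norm_num)
    refine ⟨P, ?_, ?_⟩
    · intro i j
      by_cases h : (i : ℕ) % 3 = (j : ℕ) % 3
      · simp only [hPdef, h, dist_self]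
        norm_num
      · rw [hPdef]
        rw [hVdist _ _ (hmod i) (hmod j) h]
    · intro c
      by_cases hS : (Finset.univ.filter (fun i => P i ∈ closedBall c r)).Nonempty
      · obtain ⟨i₀, hi₀⟩ := hS
        simp only [Finset.mem_filter, Finset.mem_univ, true_and, mem_closedBall] at hi₀
        have hsub : (Finset.univ.filter (fun i => P i ∈ closedBall c r))
            ⊆ (Finset.univ.filter fun i : Fin n => (i : ℕ) % 3 = (i₀ : ℕ) % 3) := by
          intro i hi
          simp only [Finset.mem_filter, Finset.mem_univ, true_and, mem_closedBall] at hi ⊢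
          by_contra hne
          have h1 : dist (P i) (P i₀) = 1 := by
            rw [hPdef]; exact hVdist _ _ (hmod i) (hmod i₀) hne
          have h2 : dist (P i) (P i₀) ≤ dist (P i) c + dist c (P i₀) := dist_triangle _ _ _
          rw [dist_comm c (P i₀)] at h2
          linarith
        calc (Finset.univ.filter (fun i => P i ∈ closedBall c r)).card
            ≤ _ := Finset.card_le_card hsub
          _ ≤ ⌈(n : ℝ) / 3⌉₊ := countRes n _ (hmod i₀)
      · rw [Finset.not_nonempty_iff_eq_empty] at hS
        rw [hS]
        simp
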